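/- arXiv:2303.11613 — 3 statements merged into one kernel-verified Lean document; each statement's English description precedes it below -/
import Mathlib

section
/- For an odd prime p and a self-dual code C ⊆ F_p^n, the vector χ = √p·(1,1,…,1) is a characteristic vector of the Construction A lattice Λ(C); that is, λ·λ ≡ χ·λ mod 2 for all λ ∈ Λ(C). -/
open scoped BigOperators

/-- Construction A lattice of a code `C ⊆ 𝔽_p^n`. -/
noncomputable def constructionA (p n : ℕ) (C : Set (Fin n → ZMod p)) : Set (Fin n → ℝ) :=
  {x | ∃ v : Fin n → ℤ, (∀ i, x i = (v i : ℝ) / Real.sqrt p) ∧ (fun i => ((v i : ZMod p))) ∈ C}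

/-- Dual code `C^⊥`. -/
def dualCode (p n : ℕ) (C : Set (Fin n → ZMod p)) : Set (Fin n → ZMod p) :=
  {c' | ∀ c ∈ C, ∑ i, c i * c' i = 0}

/-- A characteristic vector `χ` of a lattice `L`: `χ ∈ L` and
`λ·λ ≡ χ·λ (mod 2)` for all `λ ∈ L`. -/
def IsCharacteristic (n : ℕ) (L : Set (Fin n → ℝ)) (χ : Fin n → ℝ) : Prop :=
  χ ∈ L ∧ ∀ l ∈ L, ∃ k : ℤ, (∑ i, l i * l i) - (∑ i, χ i * l i) = 2 * (k : ℝ)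

/-! For `c = v mod p` in a self-orthogonal code, `p` divides `v·v`, so for `λ = v/√p` and
`χ = √p·𝟙` one gets `λ·λ - χ·λ = v·v/p - ∑ vᵢ`. Since `p` is odd, `v·v/p ≡ v·v ≡ ∑ vᵢ (mod 2)`. -/

lemma even_sum_mul_self_sub_sum {ι : Type*} (s : Finset ι) (v : ι → ℤ) :
    Even (∑ i ∈ s, v i * v i - ∑ i ∈ s, v i) := by
  rw [← Finset.sum_sub_distrib]
  exact Finset.even_sum _ fun i _ => by simpa [mul_sub] using Int.even_mul_pred_self (v i)

lemma even_sub_sum_of_sum_mul_self_eq {ι : Type*} (s : Finset ι) (v : ι → ℤ) {p t : ℤ}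
    (hp : Odd p) (ht : ∑ i ∈ s, v i * v i = p * t) : Even (t - ∑ i ∈ s, v i) := by
  have hpt : Even ((p - 1) * t) := (hp.sub_odd odd_one).mul_right t
  have key : t - ∑ i ∈ s, v i = (∑ i ∈ s, v i * v i - ∑ i ∈ s, v i) - (p - 1) * t := by
    rw [ht]; ring
  rw [key]
  exact (even_sum_mul_self_sub_sum s v).sub hpt

lemma natCast_dvd_sum_mul_self_of_subset_dualCode {p n : ℕ} {C : Set (Fin n → ZMod p)}
    (hC : C ⊆ dualCode p n C) {v : Fin n → ℤ} (hv : (fun i => (v i : ZMod p)) ∈ C) :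
    (p : ℤ) ∣ ∑ i, v i * v i := by
  rw [← ZMod.intCast_zmod_eq_zero_iff_dvd]
  push_cast
  exact hC hv _ hv

lemma sum_mul_self_of_eq_div_sqrt {p n : ℕ} {x : Fin n → ℝ} {v : Fin n → ℤ}
    (hx : ∀ i, x i = v i / √p) : ∑ i, x i * x i = (∑ i, (v i : ℝ) * v i) / p := by
  rw [Finset.sum_div]
  refine Finset.sum_congr rfl fun i _ => ?_
  rw [hx i, div_mul_div_comm, Real.mul_self_sqrt (Nat.cast_nonneg p)]

lemma sum_sqrt_mul_of_eq_div_sqrt {p n : ℕ} (hp : p ≠ 0) {x : Fin n → ℝ} {v : Fin n → ℤ}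
    (hx : ∀ i, x i = v i / √p) : ∑ i, √p * x i = ∑ i, (v i : ℝ) := by
  have hs : √(p : ℝ) ≠ 0 := by positivity
  exact Finset.sum_congr rfl fun i _ => by rw [hx i, mul_div_cancel₀ _ hs]

lemma const_sqrt_mem_constructionA {p n : ℕ} (hp : p ≠ 0) {C : Set (Fin n → ZMod p)}
    (h0 : 0 ∈ C) : (fun _ => √p) ∈ constructionA p n C := by
  refine ⟨fun _ => p, fun _ => ?_, ?_⟩
  · rw [eq_div_iff (by positivity)]
    push_cast
    exact Real.mul_self_sqrt (Nat.cast_nonneg p)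
  · simpa [Pi.zero_def] using h0

theorem isCharacteristic_constructionA_const_sqrt {p n : ℕ} (hp : Odd p)
    {C : Set (Fin n → ZMod p)} (h0 : 0 ∈ C) (hC : C ⊆ dualCode p n C) :
    IsCharacteristic n (constructionA p n C) (fun _ => √p) := by
  have hp0 : p ≠ 0 := hp.pos.ne'
  refine ⟨const_sqrt_mem_constructionA hp0 h0, ?_⟩
  rintro l ⟨v, hlv, hvC⟩
  obtain ⟨t, ht⟩ := natCast_dvd_sum_mul_self_of_subset_dualCode hC hvC
  obtain ⟨k, hk⟩ := even_iff_two_dvd.mp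
    (even_sub_sum_of_sum_mul_self_eq Finset.univ v hp.natCast ht)
  refine ⟨k, ?_⟩
  have hpR : (p : ℝ) ≠ 0 := by exact_mod_cast hp0
  rw [sum_mul_self_of_eq_div_sqrt hlv, sum_sqrt_mul_of_eq_div_sqrt hp0 hlv]
  have htR : ∑ i, (v i : ℝ) * v i = p * t := by exact_mod_cast ht
  have hkR : (t : ℝ) - ∑ i, (v i : ℝ) = 2 * k := by exact_mod_cast hk
  rw [htR, mul_div_cancel_left₀ _ hpR, hkR]

/-- For an odd prime `p` and a self-dual code `C ⊆ 𝔽_p^n`, the vector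
`χ = √p·(1,…,1)` is a characteristic vector of the Construction A lattice `Λ(C)`. -/
theorem sqrt_p_ones_isCharacteristic (p n : ℕ) (hp : p.Prime) (hp2 : p ≠ 2)
    (C : Submodule (ZMod p) (Fin n → ZMod p))
    (hsd : (C : Set (Fin n → ZMod p)) = dualCode p n (C : Set (Fin n → ZMod p))) :
    IsCharacteristic n (constructionA p n (C : Set (Fin n → ZMod p)))
      (fun _ => Real.sqrt p) :=
  isCharacteristic_constructionA_const_sqrt (hp.odd_of_ne_two hp2) C.zero_mem hsd.subset
end

section
/- Let C ⊆ F_2^n be a singly-even self-dual code and s ∈ S(C). Then χ = √2·s ∈ ℝ^n is a characteristic vector of the Construction A lattice Λ(C): for all λ ∈ Λ(C), λ·λ ≡ χ·λ mod 2. -/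
open scoped BigOperators

/-- Hamming weight of a codeword. -/
def hammingWt {p n : ℕ} (c : Fin n → ZMod p) : ℕ :=
  (Finset.univ.filter fun i => c i ≠ 0).card

/-- The doubly-even part `C₀` of a binary code. -/
def doublyEvenPart (n : ℕ) (C : Set (Fin n → ZMod 2)) : Set (Fin n → ZMod 2) :=
  {c | c ∈ C ∧ hammingWt c % 4 = 0}

/-- The shadow `S(C) = C₀^⊥ \ C` of a binary code `C`. -/
def shadowCode (n : ℕ) (C : Set (Fin n → ZMod 2)) : Set (Fin n → ZMod 2) :=
  dualCode 2 n (doublyEvenPart n C) \ C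

/-! Write `λ = v / √2` with `v ∈ ℤⁿ` reducing to `c ∈ C`. Since `x² ≡ (x mod 2) (mod 4)`,
`2 (λ·λ - χ·λ) = ∑ vᵢ² - 2 ∑ sᵢ vᵢ ≡ wt c - 2 (s·c) (mod 4)`, so it suffices that
`wt c ≡ 2 (s·c) (mod 4)` on `C`. In a self-dual binary code `wt (a + b) ≡ wt a + wt b (mod 4)`,
since `a` and `b` meet in an even number of coordinates. If `s·c = 0` for some singly-even `c`,
then every singly-even `c'` has `c' + c ∈ C₀`, hence `s·c' = s·(c' + c) = 0`; thus
`s ∈ C^⊥ = C`, contradicting `s ∉ C`. -/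

lemma mem_dualCode_iff {p n : ℕ} {C : Set (Fin n → ZMod p)} {c' : Fin n → ZMod p} :
    c' ∈ dualCode p n C ↔ ∀ c ∈ C, c ⬝ᵥ c' = 0 :=
  Iff.rfl

section BinaryWeight

variable {n : ℕ}

lemma hammingWt_eq_sum_val (c : Fin n → ZMod 2) :
    (hammingWt c : ℤ) = ∑ i, ((c i).val : ℤ) := by
  rw [hammingWt, Finset.card_filter, Nat.cast_sum]
  refine Finset.sum_congr rfl fun i _ => ?_
  generalize c i = x
  fin_cases x <;> rfl

lemma intCast_sum_val_mul (a : Fin n → ZMod 2) (v : Fin n → ℤ) :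
    ((∑ i, ((a i).val : ℤ) * v i : ℤ) : ZMod 2) = a ⬝ᵥ fun i => (v i : ZMod 2) := by
  push_cast
  simp only [ZMod.natCast_zmod_val, dotProduct]

lemma natCast_hammingWt (c : Fin n → ZMod 2) : (hammingWt c : ZMod 2) = c ⬝ᵥ c := by
  have h := congrArg (Int.cast : ℤ → ZMod 2) (hammingWt_eq_sum_val c)
  push_cast at h
  rw [h, dotProduct]
  refine Finset.sum_congr rfl fun i _ => ?_
  generalize c i = x
  fin_cases x <;> rfl

lemma hammingWt_add (a b : Fin n → ZMod 2) :
    (hammingWt (a + b) : ℤ) =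
      hammingWt a + hammingWt b - 2 * ∑ i, ((a i).val : ℤ) * (b i).val := by
  simp only [hammingWt_eq_sum_val, Finset.mul_sum, ← Finset.sum_add_distrib,
    ← Finset.sum_sub_distrib, Pi.add_apply]
  refine Finset.sum_congr rfl fun i _ => ?_
  generalize a i = x
  generalize b i = y
  fin_cases x <;> fin_cases y <;> rfl

lemma hammingWt_add_modEq {a b : Fin n → ZMod 2} (h : a ⬝ᵥ b = 0) :
    hammingWt (a + b) ≡ hammingWt a + hammingWt b [MOD 4] := by
  have hdvd : (2 : ℤ) ∣ ∑ i, ((a i).val : ℤ) * (b i).val := by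
    have := (ZMod.intCast_zmod_eq_zero_iff_dvd (∑ i, ((a i).val : ℤ) * (b i).val) 2).mp
      (by rw [intCast_sum_val_mul]; simpa only [Int.cast_natCast, ZMod.natCast_zmod_val] using h)
    exact_mod_cast this
  have := hammingWt_add a b
  unfold Nat.ModEq
  omega

lemma hammingWt_mod_four_of_mem_selfOrthogonal {C : Set (Fin n → ZMod 2)}
    (hC : C ⊆ dualCode 2 n C) {c : Fin n → ZMod 2} (hc : c ∈ C) :
    hammingWt c % 4 = 0 ∨ hammingWt c % 4 = 2 := by
  have h := natCast_hammingWt c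
  rw [mem_dualCode_iff.1 (hC hc) c hc, ZMod.natCast_eq_zero_iff] at h
  omega

end BinaryWeight

section SelfDual

variable {n : ℕ} {C : Submodule (ZMod 2) (Fin n → ZMod 2)}

lemma dotProduct_ne_zero_of_mem_shadowCode
    (hC : (C : Set (Fin n → ZMod 2)) = dualCode 2 n C) {s c : Fin n → ZMod 2}
    (hs : s ∈ shadowCode n C) (hc : c ∈ C) (hwt : hammingWt c % 4 = 2) : c ⬝ᵥ s ≠ 0 := by
  intro hcs
  refine hs.2 (hC ▸ (mem_dualCode_iff.2 fun c' hc' => ?_))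
  rcases hammingWt_mod_four_of_mem_selfOrthogonal hC.subset hc' with h0 | h2
  · exact mem_dualCode_iff.1 hs.1 c' ⟨hc', h0⟩
  · have hsum : hammingWt (c' + c) % 4 = 0 := by
      have := hammingWt_add_modEq (mem_dualCode_iff.1 (hC.subset hc) c' hc')
      unfold Nat.ModEq at this
      omega
    have := mem_dualCode_iff.1 hs.1 (c' + c) ⟨C.add_mem hc' hc, hsum⟩
    rwa [add_dotProduct, hcs, add_zero] at this

lemma hammingWt_mod_four_eq_two_mul_dotProduct
    (hC : (C : Set (Fin n → ZMod 2)) = dualCode 2 n C) {s c : Fin n → ZMod 2}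
    (hs : s ∈ shadowCode n C) (hc : c ∈ C) : hammingWt c % 4 = 2 * (c ⬝ᵥ s).val := by
  rcases hammingWt_mod_four_of_mem_selfOrthogonal hC.subset hc with h0 | h2
  · rw [h0, mem_dualCode_iff.1 hs.1 c ⟨hc, h0⟩]
    rfl
  · have hne := (ZMod.val_ne_zero _).2 (dotProduct_ne_zero_of_mem_shadowCode hC hs hc h2)
    have hlt := ZMod.val_lt (c ⬝ᵥ s)
    omega

end SelfDual

section ConstructionA

variable {n : ℕ}

lemma sq_modEq_emod_two (x : ℤ) : x ^ 2 ≡ x % 2 [ZMOD 4] := by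
  rcases Int.even_or_odd' x with ⟨q, rfl | rfl⟩
  · rw [Int.mul_emod_right]
    exact Int.modEq_zero_iff_dvd.2 ⟨q ^ 2, by ring⟩
  · rw [show (2 * q + 1) % 2 = 1 by omega]
    exact Int.modEq_iff_dvd.2 ⟨-(q ^ 2 + q), by ring⟩

lemma sum_sq_modEq_hammingWt (v : Fin n → ℤ) :
    ∑ i, v i ^ 2 ≡ hammingWt (fun i => (v i : ZMod 2)) [ZMOD 4] := by
  rw [hammingWt_eq_sum_val]
  exact Int.ModEq.sum fun i _ => by rw [ZMod.val_intCast]; exact sq_modEq_emod_two (v i)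

lemma sum_val_mul_modEq_dotProduct (s : Fin n → ZMod 2) (v : Fin n → ℤ) :
    ∑ i, ((s i).val : ℤ) * v i ≡ ((fun i => (v i : ZMod 2)) ⬝ᵥ s).val [ZMOD 2] := by
  have := (ZMod.intCast_eq_intCast_iff (∑ i, ((s i).val : ℤ) * v i)
    ((fun i => (v i : ZMod 2)) ⬝ᵥ s).val 2).1 (by
      rw [intCast_sum_val_mul, dotProduct_comm]
      simp)
  exact_mod_cast this

lemma four_dvd_sum_sq_sub_two_mul_shadow {C : Submodule (ZMod 2) (Fin n → ZMod 2)}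
    (hC : (C : Set (Fin n → ZMod 2)) = dualCode 2 n C) {s : Fin n → ZMod 2}
    (hs : s ∈ shadowCode n C) {v : Fin n → ℤ} (hv : (fun i => (v i : ZMod 2)) ∈ C) :
    (4 : ℤ) ∣ ∑ i, v i ^ 2 - 2 * ∑ i, ((s i).val : ℤ) * v i := by
  have hsq := sum_sq_modEq_hammingWt v
  have hdot := sum_val_mul_modEq_dotProduct s v
  have hwt := hammingWt_mod_four_eq_two_mul_dotProduct hC hs hv
  unfold Int.ModEq at hsq hdot
  omega

lemma two_mul_sum_sub_eq_of_forall_eq_div_sqrt_two (s : Fin n → ZMod 2) {v : Fin n → ℤ}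
    {l : Fin n → ℝ} (hl : ∀ i, l i = v i / √2) :
    2 * (∑ i, l i * l i - ∑ i, (√2 * (s i).val) * l i) =
      ((∑ i, v i ^ 2 - 2 * ∑ i, ((s i).val : ℤ) * v i : ℤ) : ℝ) := by
  simp only [hl]
  push_cast
  rw [mul_sub, Finset.mul_sum, Finset.mul_sum, Finset.mul_sum]
  congr 1 <;> refine Finset.sum_congr rfl fun i _ => ?_
  · field_simp
    rw [Real.sq_sqrt zero_le_two, mul_comm]
  · field_simp

end ConstructionA

theorem sqrt_two_shadow_characteristic_general (n : ℕ) (C : Submodule (ZMod 2) (Fin n → ZMod 2))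
    (hsd : (C : Set (Fin n → ZMod 2)) = dualCode 2 n (C : Set (Fin n → ZMod 2)))
    (s : Fin n → ZMod 2) (hs : s ∈ shadowCode n (C : Set (Fin n → ZMod 2))) :
    ∀ l ∈ constructionA 2 n (C : Set (Fin n → ZMod 2)),
      ∃ k : ℤ, (∑ i, l i * l i) - (∑ i, (Real.sqrt 2 * ((s i).val : ℝ)) * l i)
        = 2 * (k : ℝ) := by
  rintro l ⟨v, hl, hv⟩
  obtain ⟨k, hk⟩ := four_dvd_sum_sq_sub_two_mul_shadow hsd hs hv
  have h := two_mul_sum_sub_eq_of_forall_eq_div_sqrt_two s (by exact_mod_cast hl)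
  rw [hk] at h
  push_cast at h
  exact ⟨k, by linarith⟩

/-- For a singly-even self-dual binary code `C` and `s ∈ S(C)`, the vector `χ = √2·s`
is a characteristic vector of the Construction A lattice `Λ(C)`:
for all `λ ∈ Λ(C)`, `λ·λ ≡ χ·λ (mod 2)`. -/
theorem sqrt_two_shadow_characteristic (n : ℕ) (C : Submodule (ZMod 2) (Fin n → ZMod 2))
    (hsd : (C : Set (Fin n → ZMod 2)) = dualCode 2 n (C : Set (Fin n → ZMod 2)))
    (hse : ∃ c ∈ C, hammingWt c % 4 = 2)
    (s : Fin n → ZMod 2) (hs : s ∈ shadowCode n (C : Set (Fin n → ZMod 2))) :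
    ∀ l ∈ constructionA 2 n (C : Set (Fin n → ZMod 2)),
      ∃ k : ℤ, (∑ i, l i * l i) - (∑ i, (Real.sqrt 2 * ((s i).val : ℝ)) * l i)
        = 2 * (k : ℝ) :=
  sqrt_two_shadow_characteristic_general n C hsd s hs
end

section
/- For an odd prime p and a self-dual code C ⊆ F_p^n, the minimum nonzero squared norm of vectors in the Construction A lattice Λ(C) equals min{ min_{c ∈ C, c ≠ 0} Norm(c)/p , p }, where Norm(c) = Σ_i min(c_i, p − c_i)^2. -/
open scoped BigOperators

/-- Euclidean norm of a codeword: `Norm(c) = Σ_i min(c_i, p - c_i)²`, using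
representatives `c_i ∈ {0,…,p-1}`. -/
def eucNorm (p : ℕ) {n : ℕ} (c : Fin n → ZMod p) : ℕ :=
  ∑ i, (min (c i).val (p - (c i).val)) ^ 2

/-!
Write a point of `Λ(C)` as `v / √p` with `v ∈ ℤⁿ` reducing into `C`, so its squared norm is
`‖v‖² / p`. If `v ≡ 0 (mod p)`, some coordinate of `v` is a nonzero multiple of `p` and
`‖v‖² ≥ p²`; this bound is attained by `p eᵢ`. Otherwise `c = v mod p` is a nonzero codeword
and `‖v‖² ≥ Norm(c)`, because `valMinAbs` picks the shortest integer representative of each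
residue; that same representative lifts `c` to a lattice vector of squared norm `Norm(c) / p`.
-/

open Finset

lemma ZMod.valMinAbs_intCast_sq_le {p : ℕ} [NeZero p] (w : ℤ) :
    (w : ZMod p).valMinAbs ^ 2 ≤ w ^ 2 :=
  Int.natAbs_le_iff_sq_le.mp <|
    ZMod.natAbs_min_of_le_div_two p _ w (ZMod.coe_valMinAbs _) (ZMod.natAbs_valMinAbs_le _)

lemma csInf_eq_min_of_subset {α : Type*} [ConditionallyCompleteLinearOrder α] {S T : Set α}
    {a : α} (hT : T.Nonempty) (hTS : T ⊆ S) (ha : a ∈ S) (hS : BddBelow S)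
    (hlower : ∀ s ∈ S, min (sInf T) a ≤ s) : sInf S = min (sInf T) a :=
  le_antisymm (le_min (csInf_le_csInf hS hT hTS) (csInf_le hS ha)) (le_csInf ⟨a, ha⟩ hlower)

variable {p n : ℕ}

lemma eucNorm_eq_sum_valMinAbs_sq [NeZero p] (c : Fin n → ZMod p) :
    (eucNorm p c : ℤ) = ∑ i, (c i).valMinAbs ^ 2 := by
  simp [eucNorm, ← ZMod.valMinAbs_natAbs_eq_min]

lemma eucNorm_intCast_le_sum_sq [NeZero p] (v : Fin n → ℤ) :
    (eucNorm p (fun i => (v i : ZMod p)) : ℤ) ≤ ∑ i, v i ^ 2 := by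
  rw [eucNorm_eq_sum_valMinAbs_sq]
  exact sum_le_sum fun i _ => ZMod.valMinAbs_intCast_sq_le (v i)

lemma sq_le_sum_sq_of_intCast_eq_zero {ι : Type*} [Fintype ι] {v : ι → ℤ} (hv : v ≠ 0)
    (hv0 : (fun i => (v i : ZMod p)) = 0) : (p : ℤ) ^ 2 ≤ ∑ i, v i ^ 2 := by
  obtain ⟨j, hj⟩ := Function.ne_iff.mp hv
  have hdvd : p ∣ (v j).natAbs :=
    Int.natCast_dvd.mp ((ZMod.intCast_zmod_eq_zero_iff_dvd _ _).mp (congrFun hv0 j))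
  have hpj : (p : ℤ) ^ 2 ≤ v j ^ 2 :=
    Int.natAbs_le_iff_sq_le.mp (Nat.le_of_dvd (Int.natAbs_pos.mpr hj) hdvd)
  exact hpj.trans (single_le_sum (fun i _ => sq_nonneg (v i)) (mem_univ j))

lemma exists_mem_ne_zero_of_eq_dualCode [Nontrivial (ZMod p)] [Nonempty (Fin n)]
    {C : Set (Fin n → ZMod p)} (hsd : C = dualCode p n C) : ∃ c ∈ C, c ≠ 0 := by
  by_contra! hC
  have hone : (fun _ => 1 : Fin n → ZMod p) ∈ C := by
    rw [hsd]
    intro c hc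
    simp [hC c hc]
  exact one_ne_zero (congrFun (hC _ hone) (Classical.arbitrary _))

lemma sum_sq_div_sqrt {ι : Type*} [Fintype ι] (v : ι → ℤ) :
    ∑ i, ((v i : ℝ) / Real.sqrt p) ^ 2 = (∑ i, (v i : ℝ) ^ 2) / p := by
  rw [sum_div]
  refine sum_congr rfl fun i _ => ?_
  rw [div_pow, Real.sq_sqrt (Nat.cast_nonneg p)]

variable (p n) in
def latticeSqNorms (C : Set (Fin n → ZMod p)) : Set ℝ :=
  {r | ∃ v : Fin n → ℤ, v ≠ 0 ∧ (fun i => (v i : ZMod p)) ∈ C ∧ r = (∑ i, (v i : ℝ) ^ 2) / p}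

variable (p n) in
def codeNorms (C : Set (Fin n → ZMod p)) : Set ℝ :=
  {r | ∃ c ∈ C, c ≠ 0 ∧ r = (eucNorm p c : ℝ) / p}

lemma sqNorms_constructionA [NeZero p] (C : Set (Fin n → ZMod p)) :
    {r : ℝ | ∃ x ∈ constructionA p n C, x ≠ 0 ∧ r = ∑ i, x i ^ 2} = latticeSqNorms p n C := by
  have hsqrt : Real.sqrt p ≠ 0 := by simp [NeZero.ne p]
  have hzero (v : Fin n → ℤ) : (fun i => (v i : ℝ) / Real.sqrt p) = 0 ↔ v = 0 := by
    simp [funext_iff, hsqrt]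
  ext r
  constructor
  · rintro ⟨x, ⟨v, hxv, hvC⟩, hx0, rfl⟩
    obtain rfl : x = fun i => (v i : ℝ) / Real.sqrt p := funext hxv
    exact ⟨v, (hzero v).not.mp hx0, hvC, sum_sq_div_sqrt v⟩
  · rintro ⟨v, hv0, hvC, rfl⟩
    exact ⟨_, ⟨v, fun i => rfl, hvC⟩, (hzero v).not.mpr hv0, (sum_sq_div_sqrt v).symm⟩

lemma bddBelow_latticeSqNorms (C : Set (Fin n → ZMod p)) : BddBelow (latticeSqNorms p n C) :=
  ⟨0, by rintro _ ⟨v, -, -, rfl⟩; positivity⟩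

lemma bddBelow_codeNorms (C : Set (Fin n → ZMod p)) : BddBelow (codeNorms p n C) :=
  ⟨0, by rintro _ ⟨c, -, -, rfl⟩; positivity⟩

lemma codeNorms_subset_latticeSqNorms [NeZero p] (C : Set (Fin n → ZMod p)) :
    codeNorms p n C ⊆ latticeSqNorms p n C := by
  rintro _ ⟨c, hc, hc0, rfl⟩
  have hnorm : (eucNorm p c : ℝ) = ∑ i, ((c i).valMinAbs : ℝ) ^ 2 := by
    exact_mod_cast eucNorm_eq_sum_valMinAbs_sq c
  refine ⟨fun i => (c i).valMinAbs, ?_, by simpa [ZMod.coe_valMinAbs] using hc, by rw [hnorm]⟩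
  simpa [funext_iff, ZMod.valMinAbs_eq_zero] using hc0

lemma natCast_mem_latticeSqNorms [NeZero p] [Nonempty (Fin n)] {C : Set (Fin n → ZMod p)}
    (hC : 0 ∈ C) : (p : ℝ) ∈ latticeSqNorms p n C := by
  obtain ⟨i₀⟩ := ‹Nonempty (Fin n)›
  refine ⟨Pi.single i₀ p, by simp [NeZero.ne p], ?_, ?_⟩
  · have hred : (fun i => ((Pi.single (M := fun _ => ℤ) i₀ (p : ℤ) i : ℤ) : ZMod p)) = 0 := by
      ext i
      by_cases h : i = i₀ <;> simp [h]
    rwa [hred]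
  · rw [sum_eq_single i₀ (fun j _ hj => by simp [hj]) (by simp)]
    field_simp [NeZero.ne p]
    simp

lemma min_le_of_mem_latticeSqNorms [NeZero p] {C : Set (Fin n → ZMod p)} {r : ℝ}
    (hr : r ∈ latticeSqNorms p n C) : min (sInf (codeNorms p n C)) p ≤ r := by
  obtain ⟨v, hv0, hvC, rfl⟩ := hr
  have hpR : (0 : ℝ) < p := Nat.cast_pos.mpr (Nat.pos_of_neZero p)
  by_cases hc : (fun i => (v i : ZMod p)) = 0
  · have hsq : (p : ℝ) ^ 2 ≤ ∑ i, (v i : ℝ) ^ 2 := by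
      exact_mod_cast sq_le_sum_sq_of_intCast_eq_zero hv0 hc
    refine (min_le_right _ _).trans ?_
    rw [le_div_iff₀ hpR]
    nlinarith
  · have hnorm : (eucNorm p (fun i => (v i : ZMod p)) : ℝ) ≤ ∑ i, (v i : ℝ) ^ 2 := by
      exact_mod_cast eucNorm_intCast_le_sum_sq v
    refine (min_le_left _ _).trans ((csInf_le (bddBelow_codeNorms C) ⟨_, hvC, hc, rfl⟩).trans ?_)
    gcongr

theorem constructionA_min_norm_general (p n : ℕ) [Fact p.Prime]
    (C : Submodule (ZMod p) (Fin n → ZMod p))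
    (hsd : (C : Set (Fin n → ZMod p)) = dualCode p n (C : Set (Fin n → ZMod p))) :
    sInf {r : ℝ | ∃ x ∈ constructionA p n (C : Set (Fin n → ZMod p)),
        x ≠ 0 ∧ r = ∑ i, x i ^ 2} =
      min (sInf {r : ℝ | ∃ c ∈ C, c ≠ 0 ∧ r = (eucNorm p c : ℝ) / p}) (p : ℝ) := by
  rw [sqNorms_constructionA]
  change sInf (latticeSqNorms p n C) = min (sInf (codeNorms p n C)) p
  rcases isEmpty_or_nonempty (Fin n) with hn | hn
  · simp [latticeSqNorms, codeNorms, Subsingleton.elim _ (0 : Fin n → ℤ),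
      Subsingleton.elim _ (0 : Fin n → ZMod p)]
  obtain ⟨c, hc, hc0⟩ := exists_mem_ne_zero_of_eq_dualCode hsd
  exact csInf_eq_min_of_subset ⟨_, c, hc, hc0, rfl⟩ (codeNorms_subset_latticeSqNorms _)
    (natCast_mem_latticeSqNorms C.zero_mem) (bddBelow_latticeSqNorms _)
    fun r hr => min_le_of_mem_latticeSqNorms hr

/-- For an odd prime `p` and a self-dual code `C ⊆ 𝔽_p^n`, the minimum nonzero squared
norm of the Construction A lattice `Λ(C)` equals
`min( min_{c ∈ C, c ≠ 0} Norm(c)/p , p )`. -/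
theorem constructionA_min_norm (p n : ℕ) [Fact p.Prime] (hp2 : p ≠ 2)
    (C : Submodule (ZMod p) (Fin n → ZMod p))
    (hsd : (C : Set (Fin n → ZMod p)) = dualCode p n (C : Set (Fin n → ZMod p))) :
    sInf {r : ℝ | ∃ x ∈ constructionA p n (C : Set (Fin n → ZMod p)),
        x ≠ 0 ∧ r = ∑ i, x i ^ 2} =
      min (sInf {r : ℝ | ∃ c ∈ C, c ≠ 0 ∧ r = (eucNorm p c : ℝ) / p}) (p : ℝ) :=
  constructionA_min_norm_general p n C hsd
end
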